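/- For every ε > 0 there is a constant C(ε) such that for all n, m with m ≥ (1+ε)n, if 2n independent uniformly random values h_1(x_1),h_2(x_1),...,h_1(x_n),h_2(x_n) in [m] define a bipartite multigraph G on vertex set [m] ⊔ [m] with edges {(h_1(x_i), h_2(x_i))}, then the expected number of subgraphs of G that form a minimal obstruction graph (a cycle with a chord, or two cycles joined by a path of length ≥ 0) is at most C(ε)/m. -/

import Mathlib

/-!
Multigraphs are modeled by a map `ends : E → Sym2 V` assigning to each edge its
pair of endpoints.  Subgraphs are given by subsets `F : Finset E` of edges
(together with their incident vertices; isolated vertices are disregarded).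
-/

open Finset

variable {V E : Type*}

-- Vertices incident to at least one edge of `F` (isolated vertices disregarded).
open Classical in
noncomputable def vertsOf [Fintype V] (ends : E → Sym2 V) (F : Finset E) : Finset V :=
  Finset.univ.filter fun v => ∃ e ∈ F, v ∈ ends e

-- Degree of `v` in the multigraph with edge set `F` (loops count twice).
open Classical in
noncomputable def degIn (ends : E → Sym2 V) (F : Finset E) (v : V) : ℕ :=
  2 * (F.filter fun e => ends e = s(v, v)).card +
    (F.filter fun e => v ∈ ends e ∧ ends e ≠ s(v, v)).card

/-- Adjacency via an edge of `F`. -/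
def adjIn (ends : E → Sym2 V) (F : Finset E) (v w : V) : Prop :=
  ∃ e ∈ F, ends e = s(v, w)

/-- The multigraph with edge set `F` is connected (on its non-isolated vertices). -/
def connIn [Fintype V] (ends : E → Sym2 V) (F : Finset E) : Prop :=
  ∀ v ∈ vertsOf ends F, ∀ w ∈ vertsOf ends F, Relation.ReflTransGen (adjIn ends F) v w

/-- The bipartite multigraph on `[m] ⊔ [m]` whose edge for key `x ∈ T` joins the
left copy of `a(x).1` to the right copy of `a(x).2`. -/
def bipEnds {n m : ℕ} (T : Finset (Fin n)) (a : {x // x ∈ T} → Fin m × Fin m) :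
    {x // x ∈ T} → Sym2 (Fin m ⊕ Fin m) :=
  fun x => s(Sum.inl (a x).1, Sum.inr (a x).2)

/-- A minimal obstruction graph: a connected multigraph of minimum degree ≥ 2
with exactly one more edge than vertices; equivalently (for bipartite
multigraphs) a cycle with a chord or two edge-disjoint cycles joined by a
(possibly empty) simple path. -/
def isMOG {n m : ℕ} (T : Finset (Fin n)) (a : {x // x ∈ T} → Fin m × Fin m) : Prop :=
  connIn (bipEnds T a) Finset.univ ∧
  (∀ v ∈ vertsOf (bipEnds T a) Finset.univ, 2 ≤ degIn (bipEnds T a) Finset.univ v) ∧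
  T.card = (vertsOf (bipEnds T a) Finset.univ).card + 1

-- The expected number of subgraphs of `G(S, h₁, h₂)` forming minimal obstruction
-- graphs, with all `2n` hash values independent and uniform on `[m]`: each
-- labeled candidate subgraph on key set `T` is realized with probability
-- `m^{-2|T|}`.
open Classical in
noncomputable def expMOG (n m : ℕ) : ℝ :=
  ∑ T : Finset (Fin n), ∑ a : {x // x ∈ T} → Fin m × Fin m,
    if isMOG T a then (1 / (m : ℝ)) ^ (2 * T.card) else 0

/-!
A minimal obstruction graph with `t` edges is connected, has `t - 1` vertices and minimum
degree `2`; counting degrees, at most two of its vertices have odd degree, so it has an Euler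
trail. Numbering the keys along the trail and recording the trail's `t + 1` vertices, which
alternate between the two sides and take only `t - 1` distinct values, determines all hash values.
There are at most `2 (t + 1)^4 m^(t - 1)` such vertex sequences, so obstructions on `t` keys
contribute at most `C(n, t) t! 2 (t + 1)^4 m^(t - 1) m^(-2t) ≤ (2 / m) (t + 1)^4 (n / m)^t` to the
expectation, and `n / m ≤ 1 / (1 + ε)` makes the sum over `t` a convergent series.
-/

section Degree

variable {ends : E → Sym2 V}

lemma Sym2.count_toMultiset_mk [DecidableEq V] (v a b : V) :
    (s(a, b).toMultiset).count v = (if a = v then 1 else 0) + (if b = v then 1 else 0) := by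
  change Multiset.count v ↑[a, b] = _
  simp only [Multiset.coe_count, List.count_cons, List.count_nil, beq_iff_eq]
  ring

lemma degIn_eq_sum_count [DecidableEq V] (F : Finset E) (v : V) :
    degIn ends F v = ∑ e ∈ F, (ends e).toMultiset.count v := by
  have key : ∀ e, (ends e).toMultiset.count v =
      2 * (if ends e = s(v, v) then 1 else 0) +
        (if v ∈ ends e ∧ ends e ≠ s(v, v) then 1 else 0) := by
    intro e
    induction ends e using Sym2.ind with
    | h a b =>
      by_cases ha : a = v <;> by_cases hb : b = v <;> subst_vars <;>
        simp_all [Sym2.count_toMultiset_mk, eq_comm]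
  simp only [key, sum_add_distrib, ← mul_sum, sum_boole, Nat.cast_id, degIn]
  -- the two sides differ only in the decidability instances of their filters
  convert rfl using 4
  ext
  simp only [mem_filter]

lemma degIn_union [DecidableEq E] {F G : Finset E} (h : Disjoint F G) (v : V) :
    degIn ends (F ∪ G) v = degIn ends F v + degIn ends G v := by
  classical
  simp only [degIn_eq_sum_count, sum_union h]

lemma degIn_eq_add_sdiff [DecidableEq E] {F G : Finset E} (h : G ⊆ F) (v : V) :
    degIn ends F v = degIn ends G v + degIn ends (F \ G) v := by
  rw [← degIn_union disjoint_sdiff, union_sdiff_of_subset h]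

lemma degIn_eq_zero_iff {F : Finset E} {v : V} : degIn ends F v = 0 ↔ ∀ e ∈ F, v ∉ ends e := by
  classical
  simp [degIn_eq_sum_count, sum_eq_zero_iff, Multiset.count_eq_zero]

lemma mem_vertsOf [Fintype V] {F : Finset E} {v : V} :
    v ∈ vertsOf ends F ↔ ∃ e ∈ F, v ∈ ends e := by
  simp [vertsOf]

lemma degIn_eq_zero_iff_notMem_vertsOf [Fintype V] {F : Finset E} {v : V} :
    degIn ends F v = 0 ↔ v ∉ vertsOf ends F := by
  simp [degIn_eq_zero_iff, mem_vertsOf]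

lemma sum_degIn [Fintype V] (F : Finset E) : ∑ v, degIn ends F v = 2 * #F := by
  classical
  simp only [degIn_eq_sum_count]
  rw [sum_comm]
  simp [Sym2.card_toMultiset, mul_comm]

lemma sum_degIn_vertsOf [Fintype V] (F : Finset E) :
    ∑ v ∈ vertsOf ends F, degIn ends F v = 2 * #F := by
  rw [← sum_degIn (ends := ends) F]
  exact sum_subset (subset_univ _) fun v _ hv => degIn_eq_zero_iff_notMem_vertsOf.2 hv

lemma card_odd_degIn_le_two [Fintype V] {F : Finset E}
    (hdeg : ∀ v ∈ vertsOf ends F, 2 ≤ degIn ends F v) (hcard : #F = #(vertsOf ends F) + 1) :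
    #(univ.filter fun v => Odd (degIn ends F v)) ≤ 2 := by
  classical
  set W := vertsOf ends F
  set O := univ.filter fun v => Odd (degIn ends F v)
  have hOW : O ⊆ W := fun v hv => degIn_eq_zero_iff_notMem_vertsOf.not_left.1
    fun h0 => Nat.not_odd_zero (h0 ▸ (mem_filter.1 hv).2)
  have hO : ∀ v ∈ O, 3 ≤ degIn ends F v := fun v hv => by
    obtain ⟨k, hk⟩ := (mem_filter.1 hv).2
    have := hdeg v (hOW hv)
    omega
  have h₁ := card_nsmul_le_sum (W \ O) (fun v => degIn ends F v) 2
    fun v hv => hdeg v (mem_sdiff.1 hv).1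
  have h₂ := card_nsmul_le_sum O (fun v => degIn ends F v) 3 hO
  have h₃ : ∑ v ∈ W \ O, degIn ends F v + ∑ v ∈ O, degIn ends F v = 2 * (#W + 1) := by
    rw [sum_sdiff hOW, sum_degIn_vertsOf, hcard]
  rw [card_sdiff_of_subset hOW, smul_eq_mul] at h₁
  rw [smul_eq_mul] at h₂
  have := card_le_card hOW
  omega

end Degree

section Walk

variable (ends : E → Sym2 V) in
def IsWalk : V → List E → V → Prop
  | u, [], v => u = v
  | u, e :: l, v => ∃ x, ends e = s(u, x) ∧ IsWalk x l v

variable {ends : E → Sym2 V} {u v y : V} {l c : List E}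

@[simp] lemma isWalk_nil : IsWalk ends u [] v ↔ u = v := Iff.rfl

@[simp] lemma isWalk_cons {e : E} :
    IsWalk ends u (e :: l) v ↔ ∃ x, ends e = s(u, x) ∧ IsWalk ends x l v := Iff.rfl

lemma IsWalk.append (hl : IsWalk ends u l y) (hc : IsWalk ends y c v) :
    IsWalk ends u (l ++ c) v := by
  induction l generalizing u with
  | nil => rwa [List.nil_append, isWalk_nil.1 hl]
  | cons e l ih =>
    obtain ⟨x, hx, hl⟩ := hl
    exact ⟨x, hx, ih hl⟩

lemma IsWalk.exists_eq_append {e : E} (hl : IsWalk ends u l v) (he : e ∈ l) (hy : y ∈ ends e) :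
    ∃ l₁ l₂, l = l₁ ++ l₂ ∧ IsWalk ends u l₁ y ∧ IsWalk ends y l₂ v := by
  induction l generalizing u with
  | nil => simp at he
  | cons f l ih =>
    obtain ⟨x, hx, hl⟩ := hl
    rcases List.mem_cons.1 he with rfl | he
    · rcases Sym2.mem_iff.1 (hx ▸ hy) with rfl | rfl
      · exact ⟨[], e :: l, rfl, rfl, x, hx, hl⟩
      · exact ⟨[e], l, rfl, ⟨y, hx, rfl⟩, hl⟩
    · obtain ⟨l₁, l₂, rfl, h₁, h₂⟩ := ih hl he
      exact ⟨f :: l₁, l₂, rfl, ⟨x, hx, h₁⟩, h₂⟩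

lemma IsWalk.exists_perm_append {e : E} (hl : IsWalk ends u l v) (hc : IsWalk ends y c y)
    (he : e ∈ l) (hy : y ∈ ends e) : ∃ l', l'.Perm (l ++ c) ∧ IsWalk ends u l' v := by
  obtain ⟨l₁, l₂, rfl, h₁, h₂⟩ := hl.exists_eq_append he hy
  refine ⟨l₁ ++ (c ++ l₂), ?_, h₁.append (hc.append h₂)⟩
  rw [List.append_assoc]
  exact List.Perm.append_left l₁ List.perm_append_comm

lemma IsWalk.exists_vertex_seq (hl : IsWalk ends u l v) :
    ∃ w : ℕ → V, w 0 = u ∧ ∀ i (hi : i < l.length), ends l[i] = s(w i, w (i + 1)) := by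
  induction l generalizing u with
  | nil => exact ⟨fun _ => u, rfl, fun i hi => absurd hi (Nat.not_lt_zero i)⟩
  | cons e l ih =>
    obtain ⟨x, hx, hl⟩ := hl
    obtain ⟨w, hw₀, hw⟩ := ih hl
    refine ⟨fun i => Nat.casesOn i u w, rfl, fun i hi => ?_⟩
    cases i with
    | zero => simpa [hw₀] using hx
    | succ i => exact hw i (Nat.lt_of_succ_lt_succ hi)

lemma IsWalk.degIn_toFinset [DecidableEq V] [DecidableEq E] (hl : IsWalk ends u l v)
    (hnd : l.Nodup) (x : V) :
    (degIn ends l.toFinset x : ZMod 2) = (if u = x then 1 else 0) + (if v = x then 1 else 0) := by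
  induction l generalizing u with
  | nil =>
    rw [isWalk_nil.1 hl, List.toFinset_nil, degIn_eq_sum_count, sum_empty, Nat.cast_zero,
      CharTwo.add_self_eq_zero]
  | cons e l ih =>
    obtain ⟨y, hy, hl⟩ := hl
    rw [List.nodup_cons] at hnd
    rw [List.toFinset_cons, degIn_eq_sum_count, sum_insert (by simpa using hnd.1),
      ← degIn_eq_sum_count, Nat.cast_add, ih hl hnd.2, hy, Sym2.count_toMultiset_mk]
    push_cast
    linear_combination CharTwo.add_self_eq_zero (if y = x then (1 : ZMod 2) else 0)

end Walk

section Trail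

lemma ZMod.natCast_eq_ite_odd (n : ℕ) : (n : ZMod 2) = if Odd n then 1 else 0 := by
  split_ifs with h
  · exact ZMod.natCast_eq_one_iff_odd.2 h
  · exact ZMod.natCast_eq_zero_iff_even.2 (Nat.not_odd_iff_even.1 h)

variable {ends : E → Sym2 V} [DecidableEq E] {F : Finset E}

lemma exists_stuck_trail (F : Finset E) (u : V) :
    ∃ l v, l.Nodup ∧ IsWalk ends u l v ∧ l.toFinset ⊆ F ∧ ∀ e ∈ F \ l.toFinset, v ∉ ends e := by
  induction F using Finset.strongInduction generalizing u with
  | H F ih =>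
    by_cases hu : ∃ e ∈ F, u ∈ ends e
    · obtain ⟨e, he, hue⟩ := hu
      obtain ⟨x, hx⟩ := Sym2.mem_iff_exists.1 hue
      obtain ⟨l, v, hnd, hw, hsub, hstuck⟩ := ih (F.erase e) (erase_ssubset he) x
      refine ⟨e :: l, v, List.nodup_cons.2 ⟨fun h => ?_, hnd⟩, ⟨x, hx, hw⟩, ?_, ?_⟩
      · exact notMem_erase e F (hsub (List.mem_toFinset.2 h))
      · rw [List.toFinset_cons]
        exact insert_subset he (hsub.trans (erase_subset e F))
      · intro f hf
        refine hstuck f ?_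
        simp only [mem_sdiff, List.toFinset_cons, mem_insert, not_or, mem_erase] at hf ⊢
        exact ⟨⟨hf.2.1, hf.1⟩, hf.2.2⟩
    · simp only [not_exists, not_and] at hu
      exact ⟨[], u, List.nodup_nil, rfl, by simp, fun e he => hu e (mem_sdiff.1 he).1⟩

lemma degIn_cast_of_stuck [DecidableEq V] {u v : V} {l : List E} (hnd : l.Nodup)
    (hw : IsWalk ends u l v) (hsub : l.toFinset ⊆ F) (hstuck : ∀ e ∈ F \ l.toFinset, v ∉ ends e) :
    (degIn ends F v : ZMod 2) = (if u = v then 1 else 0) + 1 := by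
  rw [degIn_eq_add_sdiff hsub, degIn_eq_zero_iff.2 hstuck, add_zero, hw.degIn_toFinset hnd,
    if_pos rfl]

lemma exists_edge_sdiff_of_connIn [Fintype V] {D : Finset E} (hconn : connIn ends F)
    (hD : D ⊆ F) (hv : (vertsOf ends D).Nonempty) (hne : (F \ D).Nonempty) :
    ∃ f ∈ F \ D, ∃ y ∈ vertsOf ends D, y ∈ ends f := by
  obtain ⟨w, hw⟩ := hv
  obtain ⟨e, he⟩ := hne
  obtain ⟨z, hz⟩ : ∃ z, z ∈ ends e := ⟨_, Sym2.out_fst_mem _⟩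
  have hwF : w ∈ vertsOf ends F := by
    obtain ⟨e', he', hwe'⟩ := mem_vertsOf.1 hw
    exact mem_vertsOf.2 ⟨e', hD he', hwe'⟩
  have key : ∀ z, Relation.ReflTransGen (adjIn ends F) z w → (∃ e ∈ F \ D, z ∈ ends e) →
      ∃ f ∈ F \ D, ∃ y ∈ vertsOf ends D, y ∈ ends f := by
    intro z hpath
    induction hpath using Relation.ReflTransGen.head_induction_on with
    | refl => rintro ⟨e, he, hwe⟩; exact ⟨e, he, w, hw, hwe⟩
    | @head a c hadj _ ih =>
      rintro ⟨e, he, hae⟩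
      by_cases haD : a ∈ vertsOf ends D
      · exact ⟨e, he, a, haD, hae⟩
      obtain ⟨g, hgF, hg⟩ := hadj
      have hgD : g ∉ D := fun hgD => haD (mem_vertsOf.2 ⟨g, hgD, hg ▸ Sym2.mem_mk_left a c⟩)
      exact ih ⟨g, mem_sdiff.2 ⟨hgF, hgD⟩, hg ▸ Sym2.mem_mk_right a c⟩
  exact key z (hconn z (mem_vertsOf.2 ⟨e, (mem_sdiff.1 he).1, hz⟩) w hwF) ⟨e, he, hz⟩

lemma exists_closed_trail {G : Finset E} {f : E} {y : V} (hf : f ∈ G) (hyf : y ∈ ends f)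
    (heven : ∀ x, (degIn ends G x : ZMod 2) = 0) :
    ∃ c, c ≠ [] ∧ c.Nodup ∧ IsWalk ends y c y ∧ c.toFinset ⊆ G ∧
      ∀ x, (degIn ends (G \ c.toFinset) x : ZMod 2) = 0 := by
  classical
  obtain ⟨c, y', hnd, hw, hsub, hstuck⟩ := exists_stuck_trail (ends := ends) G y
  have hy' : y' = y := by
    have h := degIn_cast_of_stuck hnd hw hsub hstuck
    rw [heven y'] at h
    by_contra hyy
    rw [if_neg (Ne.symm hyy), zero_add] at h
    exact zero_ne_one h
  subst hy'
  refine ⟨c, ?_, hnd, hw, hsub, fun x => ?_⟩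
  · rintro rfl
    exact hstuck f (by simpa using hf) hyf
  · have h := congrArg (Nat.cast : ℕ → ZMod 2) (degIn_eq_add_sdiff (ends := ends) hsub x)
    rwa [heven x, Nat.cast_add, hw.degIn_toFinset hnd, CharTwo.add_self_eq_zero, zero_add,
      eq_comm] at h

/-- Hierholzer's algorithm: splice closed trails of the remaining edges into `l` until none are
left. -/
lemma exists_trail_toFinset_eq [Fintype V] (hconn : connIn ends F) {u v : V} {l : List E}
    (hnd : l.Nodup) (hw : IsWalk ends u l v) (hsub : l.toFinset ⊆ F) (hne : l ≠ [])
    (heven : ∀ x, (degIn ends (F \ l.toFinset) x : ZMod 2) = 0) :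
    ∃ l', l'.Nodup ∧ IsWalk ends u l' v ∧ l'.toFinset = F := by
  induction hk : #(F \ l.toFinset) using Nat.strong_induction_on generalizing l with
  | _ k ih =>
  by_cases hFl : F ⊆ l.toFinset
  · exact ⟨l, hnd, hw, hsub.antisymm hFl⟩
  obtain ⟨e₀, he₀⟩ := List.exists_mem_of_ne_nil l hne
  have hvl : (vertsOf ends l.toFinset).Nonempty :=
    ⟨_, mem_vertsOf.2 ⟨e₀, List.mem_toFinset.2 he₀, Sym2.out_fst_mem _⟩⟩
  obtain ⟨f, hf, y, hy, hyf⟩ :=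
    exists_edge_sdiff_of_connIn hconn hsub hvl (sdiff_nonempty.2 hFl)
  obtain ⟨c, hcne, hcnd, hcw, hcsub, hceven⟩ := exists_closed_trail hf hyf heven
  obtain ⟨e, he, hye⟩ := mem_vertsOf.1 hy
  obtain ⟨l', hperm, hw'⟩ := hw.exists_perm_append hcw (List.mem_toFinset.1 he) hye
  have hdisj : ∀ g ∈ c, g ∉ l := fun g hg hgl =>
    (mem_sdiff.1 (hcsub (List.mem_toFinset.2 hg))).2 (List.mem_toFinset.2 hgl)
  have hto : l'.toFinset = l.toFinset ∪ c.toFinset := by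
    rw [List.toFinset_eq_of_perm _ _ hperm, List.toFinset_append]
  have hrest : F \ l'.toFinset = (F \ l.toFinset) \ c.toFinset := by
    ext g
    simp only [hto, mem_sdiff, mem_union, not_or]
    tauto
  refine ih #(F \ l'.toFinset) ?_ (hperm.nodup_iff.2 ?_) hw' ?_ ?_ (hrest ▸ hceven) rfl
  · rw [← hk, hrest]
    exact card_lt_card (sdiff_ssubset hcsub (List.toFinset_nonempty_iff c |>.2 hcne))
  · exact List.nodup_append.2 ⟨hnd, hcnd, fun a ha b hb hab => hdisj b hb (hab ▸ ha)⟩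
  · rw [hto]
    exact union_subset hsub (hcsub.trans sdiff_subset)
  · rintro rfl
    exact hne (List.append_eq_nil_iff.1 (List.nil_perm.1 hperm)).1

lemma natCast_eq_ite_add_ite_of_card_odd_le_two [Fintype V] [DecidableEq V] {d : V → ℕ}
    (hodd : #(univ.filter fun x => Odd (d x)) ≤ 2) {u v : V}
    (hu : (∃ x, Odd (d x)) → Odd (d u)) (hv : (d v : ZMod 2) = (if u = v then 1 else 0) + 1)
    (x : V) : (d x : ZMod 2) = (if u = x then 1 else 0) + (if v = x then 1 else 0) := by
  rw [ZMod.natCast_eq_ite_odd]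
  by_cases huv : u = v
  · subst huv
    rw [if_pos rfl, CharTwo.add_self_eq_zero, ZMod.natCast_eq_ite_odd] at hv
    have hueven : ¬ Odd (d u) := fun h => by simp [h] at hv
    rw [CharTwo.add_self_eq_zero, if_neg fun hx => hueven (hu ⟨x, hx⟩)]
  · rw [if_neg huv, zero_add, ZMod.natCast_eq_one_iff_odd] at hv
    have hO : univ.filter (fun x => Odd (d x)) = {u, v} := by
      refine (eq_of_subset_of_card_le ?_ (by rwa [card_pair huv])).symm
      simp [insert_subset_iff, hu ⟨v, hv⟩, hv]
    have hx : Odd (d x) ↔ u = x ∨ v = x := by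
      simpa [eq_comm] using (congrArg (x ∈ ·) hO).to_iff
    by_cases hxu : u = x <;> by_cases hxv : v = x <;> simp_all

theorem exists_euler_trail [Fintype V] (hconn : connIn ends F) (hne : F.Nonempty)
    (hodd : #(univ.filter fun x => Odd (degIn ends F x)) ≤ 2) :
    ∃ u l v, l.Nodup ∧ IsWalk ends u l v ∧ l.toFinset = F := by
  classical
  -- start at an odd vertex if there is one
  obtain ⟨u, ⟨e, he, hue⟩, huodd⟩ : ∃ u, (∃ e ∈ F, u ∈ ends e) ∧
      ((∃ x, Odd (degIn ends F x)) → Odd (degIn ends F u)) := by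
    by_cases h : ∃ x, Odd (degIn ends F x)
    · obtain ⟨x, hx⟩ := h
      have hx0 : degIn ends F x ≠ 0 := fun h0 => Nat.not_odd_zero (h0 ▸ hx)
      simp only [ne_eq, degIn_eq_zero_iff, not_forall, not_not, exists_prop] at hx0
      exact ⟨x, hx0, fun _ => hx⟩
    · obtain ⟨e, he⟩ := hne
      exact ⟨_, ⟨e, he, Sym2.out_fst_mem _⟩, fun h' => absurd h' h⟩
  obtain ⟨l, v, hnd, hw, hsub, hstuck⟩ := exists_stuck_trail (ends := ends) F u
  have hpar := natCast_eq_ite_add_ite_of_card_odd_le_two hodd huodd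
    (degIn_cast_of_stuck hnd hw hsub hstuck)
  have hlne : l ≠ [] := by
    rintro rfl
    exact hstuck e (by simpa using he) (isWalk_nil.1 hw ▸ hue)
  have heven : ∀ x, (degIn ends (F \ l.toFinset) x : ZMod 2) = 0 := fun x => by
    have h := congrArg (Nat.cast : ℕ → ZMod 2) (degIn_eq_add_sdiff (ends := ends) hsub x)
    rwa [Nat.cast_add, hpar x, hw.degIn_toFinset hnd, left_eq_add] at h
  obtain ⟨l', hl'⟩ := exists_trail_toFinset_eq hconn hnd hw hsub hlne heven
  exact ⟨u, l', v, hl'⟩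

end Trail

section Numbering

variable {ends : E → Sym2 V} [Fintype V] [Fintype E]

theorem exists_euler_numbering [Nonempty E] (hconn : connIn ends univ)
    (hodd : #(univ.filter fun x => Odd (degIn ends univ x)) ≤ 2) :
    ∃ (σ : Fin (Fintype.card E) ≃ E) (w : ℕ → V), ∀ i, ends (σ i) = s(w i, w (i + 1)) := by
  classical
  obtain ⟨u, l, v, hnd, hw, hl⟩ := exists_euler_trail hconn univ_nonempty hodd
  have hmem : ∀ e, e ∈ l := fun e => List.mem_toFinset.1 (hl ▸ mem_univ e)
  let τ := hnd.getEquivOfForallMemList l hmem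
  have hlen : l.length = Fintype.card E := by simpa using Fintype.card_congr τ
  obtain ⟨w, -, hw'⟩ := hw.exists_vertex_seq
  refine ⟨(finCongr hlen).symm.trans τ, w, fun i => ?_⟩
  simpa [τ] using hw' i (by rw [hlen]; exact i.2)

lemma image_eq_vertsOf [DecidableEq V] [Nonempty E] {σ : Fin (Fintype.card E) ≃ E} {w : ℕ → V}
    (hw : ∀ i, ends (σ i) = s(w i, w (i + 1))) :
    univ.image (fun i : Fin (Fintype.card E + 1) => w i) = vertsOf ends univ := by
  ext x
  simp only [mem_image, mem_univ, true_and, mem_vertsOf]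
  constructor
  · rintro ⟨i, rfl⟩
    by_cases hi : (i : ℕ) < Fintype.card E
    · exact ⟨σ ⟨i, hi⟩, by simp [hw]⟩
    · have hpos : 0 < Fintype.card E := Fintype.card_pos
      refine ⟨σ ⟨Fintype.card E - 1, by omega⟩, ?_⟩
      rw [hw, show Fintype.card E - 1 + 1 = i by omega]
      exact Sym2.mem_mk_right _ _
  · rintro ⟨e, hx⟩
    obtain ⟨j, rfl⟩ := σ.surjective e
    rw [hw, Sym2.mem_iff] at hx
    rcases hx with rfl | rfl
    · exact ⟨j.castSucc, rfl⟩
    · exact ⟨j.succ, rfl⟩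

end Numbering

section Counting

variable {β : Type*} [DecidableEq β]

lemma Fin.image_univ_eq_insert_tail {N : ℕ} (f : Fin (N + 1) → β) :
    univ.image f = insert (f 0) (univ.image (Fin.tail f)) := by
  ext b
  simp [Fin.exists_fin_succ, Fin.tail, eq_comm]

variable {M : ℕ}

def seqsWithRepeats (S : ℕ → Finset β) (N r : ℕ) : Finset (Fin N → β) :=
  (Fintype.piFinset fun i : Fin N => S i).filter fun f => #(univ.image f) + r ≤ N

lemma card_seqsWithRepeats_zero_le {S : ℕ → Finset β} (hS : ∀ i, #(S i) ≤ M) (N : ℕ) :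
    #(seqsWithRepeats S N 0) ≤ M ^ N :=
  calc #(seqsWithRepeats S N 0) ≤ #(Fintype.piFinset fun i : Fin N => S i) := card_filter_le _ _
    _ = ∏ i : Fin N, #(S i) := Fintype.card_piFinset _
    _ ≤ M ^ N := by simpa using prod_le_pow_card (univ : Finset (Fin N)) _ M fun i _ => hS i

/-- A sequence with `r + 1` repetitions either starts with a fresh entry, or its head is one of
the at most `N` entries of its tail, which then has `r` repetitions. -/
lemma card_seqsWithRepeats_succ_le {S : ℕ → Finset β} (hS : ∀ i, #(S i) ≤ M) (N r : ℕ) :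
    #(seqsWithRepeats S (N + 1) (r + 1)) ≤
      M * #(seqsWithRepeats (fun i => S (i + 1)) N (r + 1)) +
        N * #(seqsWithRepeats (fun i => S (i + 1)) N r) := by
  set fresh := S 0 ×ˢ seqsWithRepeats (fun i => S (i + 1)) N (r + 1)
  set rep := (seqsWithRepeats (fun i => S (i + 1)) N r).biUnion fun g => univ.image g ×ˢ {g}
  have hmaps : ∀ f ∈ seqsWithRepeats S (N + 1) (r + 1), (f 0, Fin.tail f) ∈ fresh ∪ rep := by
    intro f hf
    simp only [seqsWithRepeats, mem_filter, Fintype.mem_piFinset,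
      Fin.image_univ_eq_insert_tail f] at hf
    have htail : ∀ i : Fin N, Fin.tail f i ∈ S (i + 1) := fun i => hf.1 i.succ
    by_cases h0 : f 0 ∈ univ.image (Fin.tail f)
    · rw [insert_eq_of_mem h0] at hf
      refine mem_union_right _
        (mem_biUnion.2 ⟨Fin.tail f, ?_, mem_product.2 ⟨h0, mem_singleton_self _⟩⟩)
      simp only [seqsWithRepeats, mem_filter, Fintype.mem_piFinset]
      exact ⟨htail, by omega⟩
    · rw [card_insert_of_notMem h0] at hf
      refine mem_union_left _ (mem_product.2 ⟨hf.1 0, ?_⟩)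
      simp only [seqsWithRepeats, mem_filter, Fintype.mem_piFinset]
      exact ⟨htail, by omega⟩
  calc #(seqsWithRepeats S (N + 1) (r + 1)) ≤ #(fresh ∪ rep) :=
        card_le_card_of_injOn (fun f => (f 0, Fin.tail f)) hmaps fun f _ g _ h => by
          obtain ⟨h₀, htail⟩ := Prod.ext_iff.1 h
          rw [← Fin.cons_self_tail f, ← Fin.cons_self_tail g]
          exact congrArg₂ _ h₀ htail
    _ ≤ #fresh + #rep := card_union_le _ _
    _ ≤ M * #(seqsWithRepeats (fun i => S (i + 1)) N (r + 1)) +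
          N * #(seqsWithRepeats (fun i => S (i + 1)) N r) := by
        gcongr
        · rw [card_product]; gcongr; exact hS 0
        · refine card_biUnion_le.trans ?_
          rw [mul_comm, ← smul_eq_mul]
          refine sum_le_card_nsmul _ _ _ fun g _ => ?_
          rw [card_product, card_singleton, mul_one]
          simpa using card_image_le (s := univ) (f := g)

theorem card_seqsWithRepeats_mul_pow_le {S : ℕ → Finset β} (hS : ∀ i, #(S i) ≤ M) (N r : ℕ) :
    #(seqsWithRepeats S N r) * M ^ r ≤ N ^ (2 * r) * M ^ N := by
  induction N generalizing S r with
  | zero =>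
    cases r with
    | zero => simpa using card_seqsWithRepeats_zero_le hS 0
    | succ r =>
      have : seqsWithRepeats S 0 (r + 1) = ∅ := filter_false_of_mem fun f _ => by omega
      simp [this]
  | succ N ih =>
    cases r with
    | zero => simpa using card_seqsWithRepeats_zero_le hS (N + 1)
    | succ r =>
      have hA := ih (fun i => hS (i + 1)) (r + 1)
      have hB := ih (fun i => hS (i + 1)) r
      have hN : N ^ (2 * r + 1) ≤ (N + 1) ^ (2 * r + 1) := Nat.pow_le_pow_left N.le_succ _
      calc #(seqsWithRepeats S (N + 1) (r + 1)) * M ^ (r + 1)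
          ≤ (M * #(seqsWithRepeats (fun i => S (i + 1)) N (r + 1)) +
              N * #(seqsWithRepeats (fun i => S (i + 1)) N r)) * M ^ (r + 1) := by
            gcongr; exact card_seqsWithRepeats_succ_le hS N r
        _ = M * (#(seqsWithRepeats (fun i => S (i + 1)) N (r + 1)) * M ^ (r + 1)) +
              N * M * (#(seqsWithRepeats (fun i => S (i + 1)) N r) * M ^ r) := by ring
        _ ≤ M * (N ^ (2 * (r + 1)) * M ^ N) + N * M * (N ^ (2 * r) * M ^ N) := by gcongr
        _ = N ^ (2 * r + 1) * (N + 1) * M ^ (N + 1) := by ring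
        _ ≤ (N + 1) ^ (2 * r + 1) * (N + 1) * M ^ (N + 1) := by gcongr
        _ = (N + 1) ^ (2 * (r + 1)) * M ^ (N + 1) := by ring

end Counting

section Obstruction

variable {n m : ℕ} {T : Finset (Fin n)} {a : {x // x ∈ T} → Fin m × Fin m}

lemma isLeft_eq_xor_of_alternating {α β : Type*} {w : ℕ → α ⊕ β} {t : ℕ}
    (h : ∀ i < t, (w (i + 1)).isLeft = !(w i).isLeft) :
    ∀ i ≤ t, (w i).isLeft = ((w 0).isLeft ^^ decide (Odd i)) := by
  intro i hi
  induction i with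
  | zero => simp
  | succ i ih =>
    rw [h i (by omega), ih (by omega)]
    simp only [Nat.odd_add_one, decide_not]
    cases (w 0).isLeft <;> cases decide (Odd i) <;> rfl

def sideSet (m : ℕ) (b : Bool) : Finset (Fin m ⊕ Fin m) :=
  if b then univ.image Sum.inl else univ.image Sum.inr

lemma mem_sideSet {b : Bool} {z : Fin m ⊕ Fin m} : z ∈ sideSet m b ↔ z.isLeft = b := by
  cases b <;> cases z <;> simp [sideSet]

lemma card_sideSet_le (m : ℕ) (b : Bool) : #(sideSet m b) ≤ m := by
  cases b <;> simp [sideSet, card_image_of_injective _ Sum.inl_injective,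
    card_image_of_injective _ Sum.inr_injective]

lemma isLeft_eq_not_of_mk_eq {α β : Type*} {p : α} {q : β} {z z' : α ⊕ β}
    (h : s(Sum.inl p, Sum.inr q) = s(z, z')) : z'.isLeft = !z.isLeft := by
  rcases Sym2.eq_iff.1 h with ⟨rfl, rfl⟩ | ⟨rfl, rfl⟩ <;> rfl

lemma eq_of_bipEnds_eq {a' : {x // x ∈ T} → Fin m × Fin m} {x : {x // x ∈ T}}
    (h : bipEnds T a x = bipEnds T a' x) : a x = a' x := by
  rcases Sym2.eq_iff.1 h with ⟨h₁, h₂⟩ | ⟨h₁, -⟩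
  · exact Prod.ext (Sum.inl_injective h₁) (Sum.inr_injective h₂)
  · exact absurd h₁ Sum.inl_ne_inr

lemma isMOG.exists_code (h : isMOG T a) :
    ∃ σ : Fin #T ≃ {x // x ∈ T}, ∃ w : Fin (#T + 1) → Fin m ⊕ Fin m,
      (∀ i : Fin #T, bipEnds T a (σ i) = s(w i.castSucc, w i.succ)) ∧
      ∃ b, w ∈ seqsWithRepeats (fun i => sideSet m (b ^^ decide (Odd i))) (#T + 1) 2 := by
  obtain ⟨hconn, hdeg, hcard⟩ := h
  have hT : #(univ : Finset {x // x ∈ T}) = #T := by simp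
  obtain ⟨x₀, hx₀⟩ : T.Nonempty := card_pos.1 (by omega)
  have : Nonempty {x // x ∈ T} := ⟨⟨x₀, hx₀⟩⟩
  obtain ⟨σ, w, hw⟩ := exists_euler_numbering hconn (card_odd_degIn_le_two hdeg (hT.trans hcard))
  have himage := image_eq_vertsOf hw
  rw [Fintype.card_coe] at himage
  let σ' := (finCongr (Fintype.card_coe T).symm).trans σ
  have hw' : ∀ i : Fin #T, bipEnds T a (σ' i) = s(w i, w (i + 1)) := fun i => hw _
  have hside := isLeft_eq_xor_of_alternating (w := w) (t := #T) fun i hi =>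
    isLeft_eq_not_of_mk_eq (hw' ⟨i, hi⟩)
  refine ⟨σ', fun i => w i, hw', (w 0).isLeft, ?_⟩
  simp only [seqsWithRepeats, mem_filter, Fintype.mem_piFinset, mem_sideSet]
  exact ⟨fun i => hside i (Nat.lt_succ_iff.1 i.2), by rw [himage]; omega⟩

open Classical in
theorem card_isMOG_mul_sq_le (T : Finset (Fin n)) :
    #(univ.filter (isMOG T (m := m))) * m ^ 2 ≤
      2 * (#T).factorial * (#T + 1) ^ 4 * m ^ (#T + 1) := by
  set t := #T
  set A : Bool → Finset (Fin (t + 1) → Fin m ⊕ Fin m) := fun b =>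
    seqsWithRepeats (fun i => sideSet m (b ^^ decide (Odd i))) (t + 1) 2
  set codes := (univ : Finset (Fin t ≃ {x // x ∈ T})) ×ˢ (A true ∪ A false)
  have hcode : ∀ a ∈ univ.filter (isMOG T (m := m)), ∃ c ∈ codes,
      ∀ i, bipEnds T a (c.1 i) = s(c.2 i.castSucc, c.2 i.succ) := by
    intro a ha
    obtain ⟨σ, w, hw, b, hb⟩ := isMOG.exists_code (mem_filter.1 ha).2
    refine ⟨(σ, w), mem_product.2 ⟨mem_univ _, ?_⟩, hw⟩
    cases b
    · exact mem_union_right _ hb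
    · exact mem_union_left _ hb
  have hdet : ∀ c ∈ codes, ({a ∈ univ.filter (isMOG T (m := m)) |
      ∀ i, bipEnds T a (c.1 i) = s(c.2 i.castSucc, c.2 i.succ)} : Set _).Subsingleton := by
    rintro c - a ⟨-, ha⟩ a' ⟨-, ha'⟩
    funext x
    obtain ⟨i, rfl⟩ := c.1.surjective x
    exact eq_of_bipEnds_eq ((ha i).trans (ha' i).symm)
  have hA : ∀ b, #(A b) * m ^ 2 ≤ (t + 1) ^ 4 * m ^ (t + 1) := fun b =>
    card_seqsWithRepeats_mul_pow_le (fun i => card_sideSet_le m _) (t + 1) 2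
  calc #(univ.filter (isMOG T (m := m))) * m ^ 2 ≤ #codes * m ^ 2 := by
        gcongr; exact card_le_card_of_forall_subsingleton _ hcode hdet
    _ ≤ t.factorial * (#(A true) + #(A false)) * m ^ 2 := by
        rw [card_product, card_univ,
          Fintype.card_equiv (Fintype.equivFinOfCardEq (Fintype.card_coe T)).symm, Fintype.card_fin]
        gcongr
        exact card_union_le _ _
    _ = t.factorial * (#(A true) * m ^ 2 + #(A false) * m ^ 2) := by ring
    _ ≤ t.factorial * ((t + 1) ^ 4 * m ^ (t + 1) + (t + 1) ^ 4 * m ^ (t + 1)) :=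
        Nat.mul_le_mul_left _ (add_le_add (hA true) (hA false))
    _ = 2 * t.factorial * (t + 1) ^ 4 * m ^ (t + 1) := by ring

end Obstruction

section Expectation

open Classical in
lemma expMOG_eq_sum_card (n m : ℕ) :
    expMOG n m =
      ∑ T : Finset (Fin n), (#(univ.filter (isMOG T (m := m))) : ℝ) * (1 / (m : ℝ)) ^ (2 * #T) := by
  simp only [expMOG, sum_ite, sum_const_zero, add_zero, sum_const, nsmul_eq_mul]

open Classical in
lemma card_isMOG_mul_pow_le {n m : ℕ} (T : Finset (Fin n)) :
    (#(univ.filter (isMOG T (m := m))) : ℝ) * (1 / (m : ℝ)) ^ (2 * #T) ≤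
      2 * (#T).factorial * (#T + 1) ^ 4 / (m : ℝ) ^ (#T + 1) := by
  rcases eq_empty_or_nonempty (univ.filter (isMOG T (m := m))) with h | ⟨a, ha⟩
  · rw [h, card_empty, Nat.cast_zero, zero_mul]
    positivity
  obtain ⟨x, hx⟩ : T.Nonempty := card_pos.1 (by have := (mem_filter.1 ha).2.2.2; omega)
  have hm : (0 : ℝ) < m := by exact_mod_cast (a ⟨x, hx⟩).1.pos
  have key : (#(univ.filter (isMOG T (m := m))) : ℝ) * m ^ 2 ≤
      2 * (#T).factorial * (#T + 1) ^ 4 * m ^ (#T + 1) := by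
    exact_mod_cast card_isMOG_mul_sq_le T
  calc (#(univ.filter (isMOG T (m := m))) : ℝ) * (1 / (m : ℝ)) ^ (2 * #T)
      = #(univ.filter (isMOG T (m := m))) * m ^ 2 / m ^ (2 * #T + 2) := by
        rw [pow_add, mul_div_mul_right _ _ (by positivity), one_div_pow, mul_one_div]
    _ ≤ 2 * (#T).factorial * (#T + 1) ^ 4 * m ^ (#T + 1) / m ^ (2 * #T + 2) := by gcongr
    _ = 2 * (#T).factorial * (#T + 1) ^ 4 / (m : ℝ) ^ (#T + 1) := by
        rw [show 2 * #T + 2 = (#T + 1) + (#T + 1) by ring, pow_add (m : ℝ) (#T + 1) (#T + 1),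
          mul_div_mul_right _ _ (by positivity)]

lemma choose_mul_factorial_div_pow_le (n m t : ℕ) :
    (n.choose t : ℝ) * (2 * t.factorial * (t + 1) ^ 4 / (m : ℝ) ^ (t + 1)) ≤
      2 / m * (((t : ℝ) + 1) ^ 4 * (n / m) ^ t) :=
  calc (n.choose t : ℝ) * (2 * t.factorial * (t + 1) ^ 4 / (m : ℝ) ^ (t + 1))
      ≤ (n ^ t / t.factorial) * (2 * t.factorial * (t + 1) ^ 4 / (m : ℝ) ^ (t + 1)) := by
        gcongr; exact Nat.choose_le_pow_div t n
    _ = 2 / m * (((t : ℝ) + 1) ^ 4 * (n / m) ^ t) := by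
        rw [div_pow]
        field_simp
        rw [pow_succ']

lemma expMOG_le (n m : ℕ) :
    expMOG n m ≤ 2 / m * ∑ t ∈ range (n + 1), ((t : ℝ) + 1) ^ 4 * (n / m) ^ t := by
  rw [expMOG_eq_sum_card, mul_sum]
  calc _ ≤ ∑ T : Finset (Fin n), (2 * (#T).factorial * (#T + 1) ^ 4 / (m : ℝ) ^ (#T + 1)) :=
        sum_le_sum fun T _ => card_isMOG_mul_pow_le T
    _ = ∑ t ∈ range (n + 1), n.choose t • (2 * t.factorial * (t + 1) ^ 4 / (m : ℝ) ^ (t + 1)) := by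
        rw [← powerset_univ, sum_powerset_apply_card
          (fun t => 2 * t.factorial * ((t : ℝ) + 1) ^ 4 / (m : ℝ) ^ (t + 1)), card_univ,
          Fintype.card_fin]
    _ ≤ _ := by
        gcongr with t
        rw [nsmul_eq_mul]
        exact choose_mul_factorial_div_pow_le n m t

end Expectation

lemma summable_add_one_pow_mul_geometric (k : ℕ) {r : ℝ} (h₀ : 0 < r) (h₁ : r < 1) :
    Summable fun t : ℕ => ((t : ℝ) + 1) ^ k * r ^ t := by
  have h : Summable fun t : ℕ => ((t + 1 : ℕ) : ℝ) ^ k * r ^ (t + 1) :=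
    (summable_nat_add_iff (f := fun t : ℕ => (t : ℝ) ^ k * r ^ t) 1).2
      (summable_pow_mul_geometric_of_norm_lt_one k (by rwa [Real.norm_of_nonneg h₀.le]))
  refine (h.mul_left r⁻¹).congr fun t => ?_
  push_cast
  field_simp
  ring

/-- For every `ε > 0` there is `C(ε)` such that for all `n`, `m`
with `m ≥ (1+ε)n`, the expected number of minimal obstruction subgraphs of the
random bipartite cuckoo multigraph is at most `C(ε)/m`. -/
theorem expected_minimal_obstruction_graphs_le (ε : ℝ) (hε : 0 < ε) :
    ∃ C : ℝ, ∀ n m : ℕ, (1 + ε) * (n : ℝ) ≤ (m : ℝ) → expMOG n m ≤ C / (m : ℝ) := by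
  set x := (1 + ε)⁻¹
  have hsum : Summable fun t : ℕ => ((t : ℝ) + 1) ^ 4 * x ^ t :=
    summable_add_one_pow_mul_geometric 4 (by positivity) (inv_lt_one_of_one_lt₀ (by linarith))
  refine ⟨2 * ∑' t : ℕ, ((t : ℝ) + 1) ^ 4 * x ^ t, fun n m hnm => ?_⟩
  have hratio : (n : ℝ) / m ≤ x := by
    rcases (Nat.cast_nonneg (α := ℝ) m).eq_or_lt with hm | hm
    · rw [← hm, div_zero]
      positivity
    · rw [div_le_iff₀ hm, le_inv_mul_iff₀ (by linarith)]
      exact hnm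
  calc expMOG n m ≤ 2 / m * ∑ t ∈ range (n + 1), ((t : ℝ) + 1) ^ 4 * (n / m) ^ t := expMOG_le n m
    _ ≤ 2 / m * ∑ t ∈ range (n + 1), ((t : ℝ) + 1) ^ 4 * x ^ t := by gcongr
    _ ≤ 2 / m * ∑' t : ℕ, ((t : ℝ) + 1) ^ 4 * x ^ t := by
        gcongr
        exact hsum.sum_le_tsum _ fun t _ => by positivity
    _ = (2 * ∑' t : ℕ, ((t : ℝ) + 1) ^ 4 * x ^ t) / m := by ring
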